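/- For every weighted extended rational expression E and every nonempty word u over A, the support of the polynomial ∂_u(E) is contained in the set of derived terms D(E); i.e., every word derivative of E is a K-linear combination of derived terms of E. -/

import Mathlib

open scoped BigOperators

/-- A semiring equipped with a star operation satisfying `k* = 1 + k·k*` and
`k* = 1 + k*·k`. -/
class StarSR (K : Type*) extends Semiring K where
  kstar : K → K
  kstar_eq_one_add_mul_kstar : ∀ k : K, kstar k = 1 + k * kstar k
  kstar_eq_one_add_kstar_mul : ∀ k : K, kstar k = 1 + kstar k * k

namespace WRatExp

noncomputable section

variable {A K : Type*}

/-- A formal power series over `A*` with weights in `K`. -/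
abbrev Series (A K : Type*) := List A → K

section Basic
variable [Semiring K]

/-- The series `⟨k⟩` sending the empty word to `k` and every other word to `0`. -/
def sOne (k : K) : Series A K := fun w => match w with
  | [] => k
  | _ :: _ => 0

/-- Pointwise addition of series. -/
def sAdd (s t : Series A K) : Series A K := fun w => s w + t w

/-- The Cauchy product of series. -/
def sMul (s t : Series A K) : Series A K :=
  fun w => ∑ i ∈ Finset.range (w.length + 1), s (List.take i w) * t (List.drop i w)

/-- Left exterior product `(k·s)(w) = k·s(w)`. -/
def lsmul (k : K) (s : Series A K) : Series A K := fun w => k * s w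

/-- Right exterior product `(s·k)(w) = s(w)·k`. -/
def rsmul (s : Series A K) (k : K) : Series A K := fun w => s w * k

/-- The proper part of a series: agrees with `s` on nonempty words, `0` at `ε`. -/
def sProper (s : Series A K) : Series A K := fun w => match w with
  | [] => 0
  | _ :: _ => s w

/-- The conjunction (Hadamard product) of series. -/
def sConj (s t : Series A K) : Series A K := fun w => s w * t w

/-- Left quotient of a series by a letter: `(a⁻¹s)(w) = s(a::w)`. -/
def aQuot (a : A) (s : Series A K) : Series A K := fun w => s (a :: w)

/-- Left quotient of a series by a word: `(u⁻¹s)(v) = s(u++v)`. -/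
def wQuot (u : List A) (s : Series A K) : Series A K := fun w => s (u ++ w)

/-- Star of a proper series: the sum over all factorizations of the word into
nonempty factors of the products of the values of `s`. -/
def sStarP (s : Series A K) : List A → K
  | [] => 1
  | a :: w => ∑ i ∈ Finset.range (w.length + 1),
      s (a :: List.take i w) * sStarP s (List.drop i w)
  termination_by l => l.length
  decreasing_by simp only [List.length_drop, List.length_cons]; omega

end Basic

section Star
variable [StarSR K]

/-- Star of an arbitrary series: `s* = (⟨s(ε)*⟩·s_p)*·⟨s(ε)*⟩`. -/
def sStar (s : Series A K) : Series A K :=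
  sMul (sStarP (sMul (sOne (StarSR.kstar (s []))) (sProper s))) (sOne (StarSR.kstar (s [])))

end Star

section Compl
variable [Semiring K] [DecidableEq K]

/-- `k^c = 1` if `k = 0`, else `0`. -/
def kcompl (k : K) : K := if k = 0 then 1 else 0

/-- Complement of a series: `s^c(w) = s(w)^c`. -/
def sCompl (s : Series A K) : Series A K := fun w => kcompl (s w)

end Compl

/-- `a·r`: the series sending `a::w` to `r(w)` and every word not starting with
`a` to `0`. -/
def aCons [Semiring K] [DecidableEq A] (a : A) (r : Series A K) : Series A K :=
  fun w => match w with
  | [] => 0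
  | b :: v => if b = a then r v else 0

/-- Weighted extended rational expressions over alphabet `A` with weights in `K`. -/
inductive Exp (A K : Type*) : Type _ where
  | zero
  | one
  | letter (a : A)
  | add (e f : Exp A K)
  | lmul (k : K) (e : Exp A K)
  | rmul (e : Exp A K) (k : K)
  | mul (e f : Exp A K)
  | star (e : Exp A K)
  | conj (e f : Exp A K)
  | compl (e : Exp A K)

section Sem
variable [StarSR K] [DecidableEq K] [DecidableEq A]

/-- The series denoted by an expression. -/
def sem : Exp A K → Series A K
  | .zero => fun _ => 0
  | .one => sOne 1
  | .letter a => fun w => if w = [a] then 1 else 0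
  | .add e f => sAdd (sem e) (sem f)
  | .lmul k e => lsmul k (sem e)
  | .rmul e k => rsmul (sem e) k
  | .mul e f => sMul (sem e) (sem f)
  | .star e => sStar (sem e)
  | .conj e f => sConj (sem e) (sem f)
  | .compl e => sCompl (sem e)

end Sem

/-- A rational polynomial: a finitely supported function from expressions to `K`. -/
abbrev Poly (A K : Type*) [Zero K] := Exp A K →₀ K

section PolyOps
variable [Semiring K]

/-- `P·F := ⊕ᵢ kᵢ⊙(Eᵢ·F)`. -/
def pMulExp (P : Poly A K) (F : Exp A K) : Poly A K :=
  Finsupp.mapDomain (fun E => Exp.mul E F) P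

/-- `P·k := ⊕ᵢ kᵢ⊙(Eᵢ·k)`. -/
def pRmul (P : Poly A K) (k : K) : Poly A K :=
  Finsupp.mapDomain (fun E => Exp.rmul E k) P

/-- `P₁ & P₂ := ⊕_{i,j} (kᵢ·hⱼ)⊙(Eᵢ&Fⱼ)`. -/
def pConj (P Q : Poly A K) : Poly A K :=
  P.sum fun E kE => Q.sum fun F hF => Finsupp.single (Exp.conj E F) (kE * hF)

/-- The expression `Σᵢ kᵢ·Eᵢ` summing a list of monomials. -/
def sumMon (l : List (K × Exp A K)) : Exp A K :=
  l.foldr (fun p acc => Exp.add (Exp.lmul p.1 p.2) acc) Exp.zero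

variable [LinearOrder (Exp A K)]

/-- `expr(P) := Σᵢ kᵢ·Eᵢ`, the monomials being summed in the fixed canonical
linear order on expressions. -/
def pExpr (P : Poly A K) : Exp A K :=
  sumMon ((P.support.sort (· ≤ ·)).map fun E => (P E, E))

/-- `P^c := 1⊙(expr(P))^c`. -/
def pCompl (P : Poly A K) : Poly A K :=
  Finsupp.single (Exp.compl (pExpr P)) 1

end PolyOps

/-- The series denoted by a polynomial: `⟦P⟧ := Σᵢ kᵢ·⟦Eᵢ⟧`. -/
def pSem [StarSR K] [DecidableEq K] [DecidableEq A] (P : Poly A K) : Series A K :=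
  fun w => P.sum fun E k => k * sem E w

/-- A rational expansion: a constant term together with a finitely supported
map from letters to rational polynomials. -/
structure Expansion (A K : Type*) [Zero K] where
  ct : K
  terms : A →₀ Poly A K

section ExpansionOps
variable [Semiring K]

/-- Sum of expansions. -/
def xAdd (X Y : Expansion A K) : Expansion A K := ⟨X.ct + Y.ct, X.terms + Y.terms⟩

/-- Left exterior product of an expansion by a weight. -/
def xLsmul (k : K) (X : Expansion A K) : Expansion A K :=
  ⟨k * X.ct, X.terms.mapRange (fun P => k • P) (smul_zero k)⟩

/-- Right exterior product of an expansion by a weight. -/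
def xRmul (X : Expansion A K) (k : K) : Expansion A K :=
  ⟨X.ct * k, X.terms.mapRange (fun P => pRmul P k) (by simp [pRmul])⟩

/-- Right product of a (proper) expansion by an expression. -/
def xMulExp (X : Expansion A K) (F : Exp A K) : Expansion A K :=
  ⟨0, X.terms.mapRange (fun P => pMulExp P F) (by simp [pMulExp])⟩

/-- Proper part of an expansion. -/
def xProper (X : Expansion A K) : Expansion A K := ⟨0, X.terms⟩

/-- Conjunction of expansions. -/
def xConj (X Y : Expansion A K) : Expansion A K :=
  ⟨X.ct * Y.ct, Finsupp.zipWith pConj (by simp [pConj]) X.terms Y.terms⟩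

/-- Complement of an expansion. -/
def xCompl [DecidableEq K] [DecidableEq A] [Fintype A] [LinearOrder (Exp A K)]
    (X : Expansion A K) : Expansion A K :=
  ⟨kcompl X.ct,
   Finsupp.equivFunOnFinite.symm fun a =>
     if a ∈ X.terms.support then pCompl (X.terms a)
     else Finsupp.single (Exp.compl Exp.zero) 1⟩

end ExpansionOps

/-- The series denoted by an expansion:
`⟦X⟧ := ⟨X_ε⟩ + Σ_{a ∈ f(X)} a·⟦X_a⟧`. -/
def xSem [StarSR K] [DecidableEq K] [DecidableEq A] (X : Expansion A K) : Series A K :=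
  fun w => sOne X.ct w + ∑ a ∈ X.terms.support, aCons a (pSem (X.terms a)) w

section DExp
variable [StarSR K] [DecidableEq K] [DecidableEq A] [Fintype A] [LinearOrder (Exp A K)]

/-- The expansion `d(E)` of an expression `E`. -/
def dE : Exp A K → Expansion A K
  | .zero => ⟨0, 0⟩
  | .one => ⟨1, 0⟩
  | .letter a => ⟨0, Finsupp.single a (Finsupp.single Exp.one 1)⟩
  | .add e f => xAdd (dE e) (dE f)
  | .lmul k e => xLsmul k (dE e)
  | .rmul e k => xRmul (dE e) k
  | .mul e f => xAdd (xMulExp (xProper (dE e)) f) (xLsmul (dE e).ct (dE f))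
  | .star e => xAdd ⟨StarSR.kstar (dE e).ct, 0⟩
      (xLsmul (StarSR.kstar (dE e).ct) (xMulExp (xProper (dE e)) (Exp.star e)))
  | .conj e f => xConj (dE e) (dE f)
  | .compl e => xCompl (dE e)

/-- Evaluation of the expansion-based derived-term automaton of an expression
on a word: `eval(E, ε) = d(E)_ε` and
`eval(E, a::u) = Σ_{F ∈ supp d(E)_a} d(E)_a(F) · eval(F, u)`. -/
def evalDT : Exp A K → List A → K
  | E, [] => (dE E).ct
  | E, _a :: u => ((dE E).terms _a).sum fun F k => k * evalDT F u
  termination_by _ u => u.length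
  decreasing_by simp only [List.length_cons]; omega

end DExp

section Deriv
variable [StarSR K] [DecidableEq K]

/-- The constant term `c(E)` of an expression. -/
def cT : Exp A K → K
  | .zero => 0
  | .one => 1
  | .letter _ => 0
  | .add e f => cT e + cT f
  | .lmul k e => k * cT e
  | .rmul e k => cT e * k
  | .mul e f => cT e * cT f
  | .star e => StarSR.kstar (cT e)
  | .conj e f => cT e * cT f
  | .compl e => kcompl (cT e)

variable [DecidableEq A] [LinearOrder (Exp A K)]

/-- The derivative `∂_a(E)` of an expression with respect to a letter,
a rational polynomial. -/
def deriv (a : A) : Exp A K → Poly A K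
  | .zero => 0
  | .one => 0
  | .letter b => if b = a then Finsupp.single Exp.one 1 else 0
  | .add e f => deriv a e + deriv a f
  | .lmul k e => k • deriv a e
  | .rmul e k => pRmul (deriv a e) k
  | .mul e f => pMulExp (deriv a e) f + cT e • deriv a f
  | .star e => StarSR.kstar (cT e) • pMulExp (deriv a e) (Exp.star e)
  | .conj e f => pConj (deriv a e) (deriv a f)
  | .compl e => pCompl (deriv a e)

/-- Linear extension of derivation to polynomials:
`∂_a(⊕ᵢ kᵢ⊙Eᵢ) := ⊕ᵢ kᵢ·∂_a(Eᵢ)`. -/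
def pDeriv (a : A) (P : Poly A K) : Poly A K := P.sum fun E k => k • deriv a E

/-- Linear extension of the constant term to polynomials:
`c(⊕ᵢ kᵢ⊙Eᵢ) := Σᵢ kᵢ·c(Eᵢ)`. -/
def cP (P : Poly A K) : K := P.sum fun E k => k * cT E

/-- Derivation of a polynomial with respect to a word (left-to-right iteration
of letter derivation). -/
def wDerivP (u : List A) (P : Poly A K) : Poly A K :=
  u.foldl (fun Q a => pDeriv a Q) P

/-- Derivation of an expression with respect to a word: `∂_{[a]}(E) = ∂_a(E)`
and `∂_{u++[a]}(E) = ∂_a(∂_u(E))`. -/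
def wDeriv (u : List A) (E : Exp A K) : Poly A K := wDerivP u (Finsupp.single E 1)

end Deriv

section DerivedTerms
variable [Semiring K] [LinearOrder (Exp A K)]

/-- The set of derived terms `D(E)` of an expression. -/
def DT : Exp A K → Set (Exp A K)
  | .zero => ∅
  | .one => ∅
  | .letter _ => {Exp.one}
  | .add e f => DT e ∪ DT f
  | .lmul _ e => DT e
  | .rmul e k => (fun E' => Exp.rmul E' k) '' DT e
  | .mul e f => (fun E' => Exp.mul E' f) '' DT e ∪ DT f
  | .star e => (fun E' => Exp.mul E' (Exp.star e)) '' DT e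
  | .conj e f => Set.image2 Exp.conj (DT e) (DT f)
  | .compl e => { G | ∃ l : List (K × Exp A K),
      List.Chain' (· < ·) (l.map Prod.snd) ∧
      (∀ p ∈ l, p.2 ∈ DT e) ∧ G = Exp.compl (sumMon l) }

end DerivedTerms

/-- An expression contains no occurrence of the complement operator. -/
def complFree : Exp A K → Prop
  | .zero => True
  | .one => True
  | .letter _ => True
  | .add e f => complFree e ∧ complFree f
  | .lmul _ e => complFree e
  | .rmul e _ => complFree e
  | .mul e f => complFree e ∧ complFree f
  | .star e => complFree e
  | .conj e f => complFree e ∧ complFree f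
  | .compl _ => False

end

end WRatExp

open WRatExp

/-! Every derivative `∂_a(E)` is supported in `D(E)`, and `D(E)` is closed under derivation:
`∂_a` of a derived term of `E` is again supported in `D(E)`. Both facts go by induction on `E`;
the second uses the first for the summand `c(E')·∂_a(F)` of `∂_a(E'·F)` and for `∂_a(E*)`.
For complements, `expr(P)` lists the support of `P` in the canonical order, so `P^c` is a
derived term of `E^c` as soon as `P` is supported in `D(E)`. Since `∂_u` for `u ≠ []` starts
with some `∂_a(E)` and then only applies the linear maps `∂_b`, its support stays in `D(E)`. -/

namespace WRatExp

section FinsuppSupport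

variable {α M R : Type*}

theorem coe_support_add_subset [AddZeroClass M] (f g : α →₀ M) :
    (↑(f + g).support : Set α) ⊆ ↑f.support ∪ ↑g.support := by
  classical
  rw [← Finset.coe_union]
  exact Finset.coe_subset.2 Finsupp.support_add

theorem coe_support_smul_subset [Zero M] [SMulZeroClass R M] (r : R) (f : α →₀ M) :
    (↑(r • f).support : Set α) ⊆ ↑f.support :=
  Finset.coe_subset.2 Finsupp.support_smul

theorem coe_support_single_subset [Zero M] (a : α) (m : M) :
    (↑(Finsupp.single a m).support : Set α) ⊆ {a} := by
  rw [← Finset.coe_singleton]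
  exact Finset.coe_subset.2 Finsupp.support_single_subset

end FinsuppSupport

variable {A K : Type*}

section PolySupport

variable [Semiring K]

theorem support_pMulExp_subset (P : Poly A K) (F : Exp A K) :
    (↑(pMulExp P F).support : Set (Exp A K)) ⊆ (fun E => Exp.mul E F) '' ↑P.support := by
  classical
  rw [← Finset.coe_image]
  exact Finset.coe_subset.2 Finsupp.mapDomain_support

theorem support_pRmul_subset (P : Poly A K) (k : K) :
    (↑(pRmul P k).support : Set (Exp A K)) ⊆ (fun E => Exp.rmul E k) '' ↑P.support := by
  classical
  rw [← Finset.coe_image]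
  exact Finset.coe_subset.2 Finsupp.mapDomain_support

theorem support_pConj_subset (P Q : Poly A K) :
    (↑(pConj P Q).support : Set (Exp A K)) ⊆ Set.image2 Exp.conj ↑P.support ↑Q.support := by
  classical
  intro G hG
  obtain ⟨E, hE, hG⟩ := Finset.mem_biUnion.1 (Finsupp.support_sum (Finset.mem_coe.1 hG))
  obtain ⟨F, hF, hG⟩ := Finset.mem_biUnion.1 (Finsupp.support_sum hG)
  obtain rfl := Finset.mem_singleton.1 (Finsupp.support_single_subset hG)
  exact Set.mem_image2_of_mem hE hF

variable [LinearOrder (Exp A K)]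

theorem compl_pExpr_mem_DT {e : Exp A K} {P : Poly A K} (h : ↑P.support ⊆ DT e) :
    Exp.compl (pExpr P) ∈ DT (Exp.compl e) := by
  refine ⟨(P.support.sort (· ≤ ·)).map fun F => (P F, F), ?_, ?_, rfl⟩
  · simp only [List.map_map, Function.comp_def, List.map_id']
    exact List.sortedLT_iff_isChain.1 (Finset.sortedLT_sort _)
  · simp only [List.mem_map, Finset.mem_sort]
    rintro _ ⟨F, hF, rfl⟩
    exact h hF

end PolySupport

section Deriv

variable [StarSR K] [DecidableEq K] [DecidableEq A] [LinearOrder (Exp A K)]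

theorem support_deriv_subset_DT (a : A) (E : Exp A K) : ↑(deriv a E).support ⊆ DT E := by
  induction E with
  | zero | one => simp [deriv]
  | letter b =>
    by_cases hb : b = a
    · rw [deriv, if_pos hb]
      exact coe_support_single_subset _ _
    · simp [deriv, hb]
  | add e f ihe ihf =>
    exact (coe_support_add_subset _ _).trans (Set.union_subset_union ihe ihf)
  | lmul k e ihe => exact (coe_support_smul_subset _ _).trans ihe
  | rmul e k ihe => exact (support_pRmul_subset _ _).trans (Set.image_mono ihe)
  | mul e f ihe ihf =>
    exact (coe_support_add_subset _ _).trans <| Set.union_subset_union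
      ((support_pMulExp_subset _ _).trans (Set.image_mono ihe))
      ((coe_support_smul_subset _ _).trans ihf)
  | star e ihe =>
    exact (coe_support_smul_subset _ _).trans
      ((support_pMulExp_subset _ _).trans (Set.image_mono ihe))
  | conj e f ihe ihf =>
    exact (support_pConj_subset _ _).trans (Set.image2_subset ihe ihf)
  | compl e ihe =>
    exact (coe_support_single_subset _ _).trans <| Set.singleton_subset_iff.2 <|
      compl_pExpr_mem_DT ihe

theorem support_deriv_sumMon_subset {a : A} {S : Set (Exp A K)} {l : List (K × Exp A K)}
    (h : ∀ p ∈ l, ↑(deriv a p.2).support ⊆ S) : ↑(deriv a (sumMon l)).support ⊆ S := by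
  induction l with
  | nil => simp [sumMon, deriv]
  | cons p l ih =>
    exact (coe_support_add_subset _ _).trans <| Set.union_subset
      ((coe_support_smul_subset _ _).trans (h p List.mem_cons_self))
      (ih fun q hq => h q (List.mem_cons_of_mem p hq))

theorem support_deriv_subset_DT_of_mem_DT (a : A) {E F : Exp A K} (hF : F ∈ DT E) :
    ↑(deriv a F).support ⊆ DT E := by
  induction E generalizing F with
  | zero | one => exact absurd hF id
  | letter b =>
    obtain rfl : F = Exp.one := hF
    simp [deriv]
  | add e f ihe ihf =>
    rcases hF with hF | hF
    · exact (ihe hF).trans Set.subset_union_left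
    · exact (ihf hF).trans Set.subset_union_right
  | lmul k e ihe => exact ihe hF
  | rmul e k ihe =>
    obtain ⟨F, hF, rfl⟩ := hF
    exact (support_pRmul_subset _ _).trans (Set.image_mono (ihe hF))
  | mul e f ihe ihf =>
    rcases hF with ⟨F, hF, rfl⟩ | hF
    · exact (coe_support_add_subset _ _).trans <| Set.union_subset_union
        ((support_pMulExp_subset _ _).trans (Set.image_mono (ihe hF)))
        ((coe_support_smul_subset _ _).trans (support_deriv_subset_DT a f))
    · exact (ihf hF).trans Set.subset_union_right
  | star e ihe =>
    obtain ⟨F, hF, rfl⟩ := hF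
    exact (coe_support_add_subset _ _).trans <| Set.union_subset
      ((support_pMulExp_subset _ _).trans (Set.image_mono (ihe hF)))
      ((coe_support_smul_subset _ _).trans (support_deriv_subset_DT a (Exp.star e)))
  | conj e f ihe ihf =>
    obtain ⟨F, hF, G, hG, rfl⟩ := hF
    exact (support_pConj_subset _ _).trans (Set.image2_subset (ihe hF) (ihf hG))
  | compl e ihe =>
    obtain ⟨l, -, hl, rfl⟩ := hF
    exact (coe_support_single_subset _ _).trans <| Set.singleton_subset_iff.2 <|
      compl_pExpr_mem_DT (support_deriv_sumMon_subset fun p hp => ihe (hl p hp))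

theorem support_pDeriv_subset {a : A} {S : Set (Exp A K)} {P : Poly A K}
    (h : ∀ F ∈ P.support, ↑(deriv a F).support ⊆ S) : ↑(pDeriv a P).support ⊆ S := by
  intro G hG
  obtain ⟨F, hF, hG⟩ := Finset.mem_biUnion.1 (Finsupp.support_sum (Finset.mem_coe.1 hG))
  exact h F hF (Finsupp.support_smul hG)

theorem support_wDerivP_subset {S : Set (Exp A K)}
    (hS : ∀ a, ∀ F ∈ S, ↑(deriv a F).support ⊆ S) (u : List A) {P : Poly A K}
    (hP : ↑P.support ⊆ S) : ↑(wDerivP u P).support ⊆ S := by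
  induction u generalizing P with
  | nil => exact hP
  | cons a u ih => exact ih (support_pDeriv_subset fun F hF => hS a F (hP hF))

theorem wDeriv_cons (a : A) (u : List A) (E : Exp A K) :
    wDeriv (a :: u) E = wDerivP u (deriv a E) := by
  simp [wDeriv, wDerivP, pDeriv, Finsupp.sum_single_index]

end Deriv

end WRatExp

/-- for every nonempty word `u`, the support of `∂_u(E)` is
contained in `D(E)`. -/
theorem wDeriv_support_subset_derived_terms {A K : Type*} [StarSR K] [DecidableEq K]
    [DecidableEq A] [LinearOrder (Exp A K)] (E : Exp A K) (u : List A) (hu : u ≠ []) :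
    ↑(wDeriv u E).support ⊆ DT E := by
  obtain ⟨a, v, rfl⟩ := List.exists_cons_of_ne_nil hu
  rw [wDeriv_cons]
  exact support_wDerivP_subset (fun b _ => support_deriv_subset_DT_of_mem_DT b) v
    (support_deriv_subset_DT a E)
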